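/- If g_i contains only nonlinear i-th resonant monomials for each i, and L is a linear map of the block-diagonal form L = Diag(A_1,…,A_l) respecting the weight blocks (i.e., L_{ij} ≠ 0 implies m_i = m_j), then the composition τ ∘ L ∘ σ (with σ_i = z_i + g_i and τ = σ^{-1}) is a polynomial map each of whose components f_i contains only i-th resonant monomials; in particular deg f ≤ μ, the resonance order. -/
import Mathlib


open MvPolynomial

namespace ResonantAux

variable {n : ℕ}

lemma weight_eq (m : Fin n → ℕ) (d : Fin n →₀ ℕ) :
    (Finsupp.weight m) d = ∑ j, m j * d j := by
  rw [Finsupp.weight_apply, Finsupp.sum_fintype]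
  · exact Finset.sum_congr rfl fun j _ => by rw [smul_eq_mul, mul_comm]
  · intro; simp

lemma wh_iff (m : Fin n → ℕ) (p : MvPolynomial (Fin n) ℂ) (w : ℕ) :
    IsWeightedHomogeneous m p w ↔ ∀ α ∈ p.support, (∑ j, m j * α j) = w := by
  constructor
  · intro h α hα
    rw [← weight_eq]; exact h (mem_support_iff.1 hα)
  · intro h d hd
    rw [weight_eq]; exact h d (mem_support_iff.2 hd)

lemma wh_neg {m : Fin n → ℕ} {p : MvPolynomial (Fin n) ℂ} {w : ℕ}
    (h : IsWeightedHomogeneous m p w) : IsWeightedHomogeneous m (-p) w := by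
  intro d hd
  exact h (by simpa using hd)

lemma wh_sub {m : Fin n → ℕ} {p q : MvPolynomial (Fin n) ℂ} {w : ℕ}
    (h1 : IsWeightedHomogeneous m p w) (h2 : IsWeightedHomogeneous m q w) :
    IsWeightedHomogeneous m (p - q) w := by
  rw [sub_eq_add_neg]; exact h1.add (wh_neg h2)

lemma wh_pow {m : Fin n → ℕ} {p : MvPolynomial (Fin n) ℂ} {w : ℕ}
    (h : IsWeightedHomogeneous m p w) (k : ℕ) :
    IsWeightedHomogeneous m (p ^ k) (k * w) := by
  induction k with
  | zero => simpa using isWeightedHomogeneous_one (R := ℂ) m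
  | succ k ih =>
      have := ih.mul h
      rw [← pow_succ] at this
      convert this using 1
      ring

lemma wh_aeval {m : Fin n → ℕ} (q : Fin n → MvPolynomial (Fin n) ℂ)
    (hq : ∀ j, IsWeightedHomogeneous m (q j) (m j))
    {p : MvPolynomial (Fin n) ℂ} {w : ℕ} (hp : IsWeightedHomogeneous m p w) :
    IsWeightedHomogeneous m (aeval q p) w := by
  rw [aeval_def, eval₂_eq]
  apply IsWeightedHomogeneous.sum
  intro d hd
  by_cases hc : coeff d p = 0
  · rw [hc, map_zero, zero_mul]; exact isWeightedHomogeneous_zero _ _ _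
  have hdw : (Finsupp.weight m) d = w := hp hc
  have hprod : IsWeightedHomogeneous m (∏ i ∈ d.support, q i ^ d i)
      (∑ i ∈ d.support, d i * m i) := by
    apply IsWeightedHomogeneous.prod
    intro i _
    have := wh_pow (hq i) (d i)
    exact this
  have hC : IsWeightedHomogeneous m (algebraMap ℂ (MvPolynomial (Fin n) ℂ) (coeff d p)) 0 := by
    rw [MvPolynomial.algebraMap_eq]
    exact isWeightedHomogeneous_C m _
  have := hC.mul hprod
  rw [zero_add] at this
  convert this using 1
  rw [← hdw, Finsupp.weight_apply, Finsupp.sum]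
  exact Finset.sum_congr rfl fun i _ => by rw [smul_eq_mul, mul_comm]

lemma small {m : Fin n → ℕ} (hpos : ∀ i, 0 < m i)
    {g : Fin n → MvPolynomial (Fin n) ℂ}
    (hg : ∀ i, ∀ α ∈ (g i).support, (∑ j, m j * α j) = m i ∧ 2 ≤ ∑ j, α j)
    (i : Fin n) (α : Fin n →₀ ℕ) (hα : α ∈ (g i).support)
    (j : Fin n) (hj : α j ≠ 0) : m j < m i := by
  obtain ⟨h1, h2⟩ := hg i α hα
  by_contra hle
  push_neg at hle
  have hj1 : 1 ≤ α j := Nat.pos_of_ne_zero hj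
  have hle2 : m j * α j ≤ m i := by
    rw [← h1]
    exact Finset.single_le_sum (f := fun k => m k * α k) (fun k _ => Nat.zero_le _)
      (Finset.mem_univ j)
  have hmj : m i ≤ m j * α j := le_trans hle (Nat.le_mul_of_pos_right _ hj1)
  have heq : m j * α j = m i := le_antisymm hle2 hmj
  have hrest : ∑ k ∈ Finset.univ.erase j, m k * α k = 0 := by
    have hsum := Finset.add_sum_erase Finset.univ (fun k => m k * α k) (Finset.mem_univ j)
    omega
  have hall : ∀ k, k ≠ j → α k = 0 := by
    intro k hk
    have hk0 : m k * α k = 0 :=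
      (Finset.sum_eq_zero_iff.1 hrest) k (Finset.mem_erase.2 ⟨hk, Finset.mem_univ k⟩)
    have := hpos k
    rcases Nat.mul_eq_zero.1 hk0 with h | h
    · omega
    · exact h
  have hαj : α j = 1 := by
    have : m j * α j = m j * 1 := by
      rw [mul_one, heq]
      exact le_antisymm hle (le_trans (Nat.le_mul_of_pos_right _ hj1) hle2)
  
    exact Nat.eq_of_mul_eq_mul_left (hpos j) this
  have hsum1 : ∑ k, α k = 1 := by
    rw [Finset.sum_eq_single_of_mem j (Finset.mem_univ j) (fun k _ hk => hall k hk), hαj]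
  omega

lemma aeval_congr_small {m : Fin n → ℕ} (hpos : ∀ i, 0 < m i)
    {g : Fin n → MvPolynomial (Fin n) ℂ}
    (hg : ∀ i, ∀ α ∈ (g i).support, (∑ j, m j * α j) = m i ∧ 2 ≤ ∑ j, α j)
    (i : Fin n) (q q' : Fin n → MvPolynomial (Fin n) ℂ)
    (h : ∀ j, m j < m i → q j = q' j) :
    aeval q (g i) = aeval q' (g i) := by
  rw [aeval_def, aeval_def, eval₂_eq, eval₂_eq]
  apply Finset.sum_congr rfl
  intro d hd
  congr 1
  apply Finset.prod_congr rfl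
  intro j hj
  rw [h j (small hpos hg i d hd j (Finsupp.mem_support_iff.1 hj))]

/-- inverse approximants -/
noncomputable def tPoly (g : Fin n → MvPolynomial (Fin n) ℂ) : ℕ → Fin n → MvPolynomial (Fin n) ℂ
  | 0 => fun i => X i
  | (N + 1) => fun i => X i - aeval (tPoly g N) (g i)

lemma tPoly_wh {m : Fin n → ℕ}
    {g : Fin n → MvPolynomial (Fin n) ℂ}
    (hg : ∀ i, ∀ α ∈ (g i).support, (∑ j, m j * α j) = m i ∧ 2 ≤ ∑ j, α j)
    (N : ℕ) (i : Fin n) : IsWeightedHomogeneous m (tPoly g N i) (m i) := by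
  induction N generalizing i with
  | zero => exact isWeightedHomogeneous_X _ _ _
  | succ N ih =>
      exact wh_sub (isWeightedHomogeneous_X _ _ _)
        (wh_aeval _ (fun j => ih j) ((wh_iff m (g i) (m i)).2 (fun α hα => (hg i α hα).1)))

lemma tPoly_inv {m : Fin n → ℕ} (hpos : ∀ i, 0 < m i)
    {g : Fin n → MvPolynomial (Fin n) ℂ}
    (hg : ∀ i, ∀ α ∈ (g i).support, (∑ j, m j * α j) = m i ∧ 2 ≤ ∑ j, α j)
    (N : ℕ) (i : Fin n) (hi : m i ≤ N) :
    aeval (fun k => X k + g k) (tPoly g N i) = X i := by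
  induction N generalizing i with
  | zero => exact absurd (lt_of_lt_of_le (hpos i) hi) (by omega)
  | succ N ih =>
      simp only [tPoly]
      rw [map_sub, aeval_X]
      have hcomp : aeval (fun k => X k + g k) (aeval (tPoly g N) (g i)) =
          aeval (fun j => aeval (fun k => X k + g k) (tPoly g N j)) (g i) :=
        comp_aeval_apply _ _ _
      rw [hcomp, aeval_congr_small hpos hg i _ X
        (fun j hj => ih j (by omega)), aeval_X_left_apply]
      ring

end ResonantAux

open ResonantAux

/-- with `σ_i = z_i + g_i` (nonlinear resonant tails), `τ = σ⁻¹`, and `L` a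
linear map respecting the weight blocks (`L i j ≠ 0 → m i = m j`), the composition
`τ ∘ L ∘ σ` is a polynomial map whose `i`-th component contains only `i`-th resonant
monomials; in particular its degree is at most the resonance order `μ`. -/
theorem conjugated_linear_map_resonant (n : ℕ) (m : Fin n → ℕ)
    (hpos : ∀ i, 0 < m i) (hmono : Monotone m)
    (g : Fin n → MvPolynomial (Fin n) ℂ)
    (hg : ∀ i, ∀ α ∈ (g i).support, (∑ j, m j * α j) = m i ∧ 2 ≤ ∑ j, α j)
    (σ τ : (Fin n → ℂ) → (Fin n → ℂ))
    (hσ : ∀ z i, σ z i = z i + eval z (g i))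
    (hinv : Function.LeftInverse τ σ ∧ Function.RightInverse τ σ)
    (L : Matrix (Fin n) (Fin n) ℂ)
    (hL : ∀ i j, L i j ≠ 0 → m i = m j) :
    ∃ f : Fin n → MvPolynomial (Fin n) ℂ,
      (∀ z : Fin n → ℂ, (fun i => eval z (f i)) = τ (L.mulVec (σ z))) ∧
      (∀ i, ∀ α ∈ (f i).support, (∑ j, m j * α j) = m i) ∧
      (∀ i, (f i).totalDegree ≤
        sSup {k : ℕ | ∃ (i' : Fin n) (α : Fin n → ℕ),
          (∑ j, m j * α j) = m i' ∧ (∑ j, α j) = k}) := by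
  have haeval_eval : ∀ (z : Fin n → ℂ) (p : MvPolynomial (Fin n) ℂ), aeval z p = eval z p := by
    intro z p
    rw [aeval_def]
    rfl
  set M : ℕ := Finset.univ.sup m with hM
  set s : Fin n → MvPolynomial (Fin n) ℂ := fun k => X k + g k with hs
  set t : Fin n → MvPolynomial (Fin n) ℂ := tPoly g M with ht
  set Ls : Fin n → MvPolynomial (Fin n) ℂ := fun j => ∑ k, C (L j k) * s k with hLs
  -- evaluation facts
  have hsz : ∀ (z : Fin n → ℂ) (k : Fin n), eval z (s k) = σ z k := by
    intro z k
    simp [hs, hσ z k]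
  have hkey : ∀ (w : Fin n → ℂ) (i : Fin n), eval w (t i) = τ w i := by
    have hstep : ∀ (z : Fin n → ℂ) (i : Fin n), eval (σ z) (t i) = z i := by
      intro z i
      have h1 : aeval z (aeval s (t i)) = aeval (fun j => aeval z (s j)) (t i) :=
        comp_aeval_apply _ _ _
      rw [tPoly_inv hpos hg M i (Finset.le_sup (Finset.mem_univ i))] at h1
      rw [aeval_X] at h1
      have h2 : (fun j => aeval z (s j)) = σ z := by
        funext j; rw [haeval_eval, hsz]
      rw [h2, haeval_eval] at h1
      exact h1.symm
    intro w i
    have := hstep (τ w) i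
    rwa [hinv.2 w] at this
  have hsh : ∀ k, IsWeightedHomogeneous m (s k) (m k) :=
    fun k => (isWeightedHomogeneous_X _ _ _).add
      ((wh_iff m (g k) (m k)).2 (fun α hα => (hg k α hα).1))
  have hLsh : ∀ j, IsWeightedHomogeneous m (Ls j) (m j) := by
    intro j
    apply IsWeightedHomogeneous.sum
    intro k _
    by_cases hk : L j k = 0
    · rw [hk, map_zero, zero_mul]; exact isWeightedHomogeneous_zero _ _ _
    · have := (isWeightedHomogeneous_C m (L j k)).mul (hsh k)
      rw [zero_add] at this
      rwa [hL j k hk]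
  have hfres : ∀ i, ∀ α ∈ ((aeval Ls (t i) : MvPolynomial (Fin n) ℂ)).support,
      (∑ j, m j * α j) = m i :=
    fun i => (wh_iff m _ (m i)).1 (wh_aeval Ls hLsh (tPoly_wh hg M i))
  refine ⟨fun i => aeval Ls (t i), ?_, hfres, ?_⟩
  · intro z
    funext i
    have h1 : aeval z (aeval Ls (t i)) = aeval (fun j => aeval z (Ls j)) (t i) :=
      comp_aeval_apply _ _ _
    have h2 : (fun j => aeval z (Ls j)) = L.mulVec (σ z) := by
      funext j
      simp only [hLs, map_sum, map_mul, aeval_C, Algebra.algebraMap_self_apply, haeval_eval, hsz]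
      simp [Matrix.mulVec, dotProduct]
    rw [h2] at h1
    rw [haeval_eval, haeval_eval, hkey] at h1
    exact h1
  · -- degree bound
    intro i
    set S : Set ℕ := {k : ℕ | ∃ (i' : Fin n) (α : Fin n → ℕ),
      (∑ j, m j * α j) = m i' ∧ (∑ j, α j) = k} with hS
    have hbdd : BddAbove S := by
      refine ⟨M, ?_⟩
      rintro k ⟨i', α, h1, h2⟩
      have h3 : ∑ j, α j ≤ ∑ j, m j * α j :=
        Finset.sum_le_sum fun j _ => Nat.le_mul_of_pos_left (α j) (hpos j)
      rw [h2] at h3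
      exact le_trans (h3.trans_eq h1) (Finset.le_sup (Finset.mem_univ i'))
    rw [totalDegree]
    apply Finset.sup_le
    intro α hα
    have hsum : (α.sum fun _ e => e) = ∑ j, α j := by
      rw [Finsupp.sum_fintype]
      intro; rfl
    have hmem : (α.sum fun _ e => e) ∈ S := by
      refine ⟨i, fun j => α j, hfres i α hα, hsum.symm⟩
    exact le_csSup hbdd hmem
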